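/- Let K1, K2, K3 : ℕ → ℝ with K3(n) ≠ 0 for all n, and let (a_n) be the paper's auxiliary sequence a associated with K1, K2, K3 (a_1 = K3(0) and the one-step recursion from the paper). Then a_2 = K3(1)·(K3(0) + K2(0)), and for every n ≥ 2, a_{n+1} = [K3(n)·(n − 1 + K1(n−1) + K2(n−1) + K3(n−1))/K3(n−1)]·a_n − K3(n)·(n − 1 + K1(n−1))·a_{n−1}. -/

import Mathlib

open Finset

/-! Write `a (m + 2) = K3 (m + 1) * (a (m + 1) + T m)`. The tail `T` obeys the first-order
recursion `T (m + 1) = c (m + 1) * T m + K2 (m + 1) * a (m + 1)` with `c j = j + K1 j + K2 j`;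
eliminating `T m = a (m + 2) / K3 (m + 1) - a (m + 1)` between two consecutive instances of the
recursion for `a` gives the three-term recursion. -/

theorem Finset.sum_Icc_mul_prod_Icc_succ_top {R : Type*} [CommSemiring R] (f c : ℕ → R)
    {k m : ℕ} (hkm : k ≤ m + 1) :
    ∑ i ∈ Icc k (m + 1), f i * ∏ j ∈ Icc (i + 1) (m + 1), c j
      = (∑ i ∈ Icc k m, f i * ∏ j ∈ Icc (i + 1) m, c j) * c (m + 1) + f (m + 1) := by
  rw [sum_Icc_succ_top hkm, Icc_eq_empty (a := m + 1 + 1) (by omega), prod_empty, mul_one, sum_mul]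
  congr 1
  refine sum_congr rfl fun i hi => ?_
  rw [prod_Icc_succ_top (by simp at hi; omega), mul_assoc]

/-- The bracket multiplying `K3(n-1)` in the recursion for `a_n`, with `m = n - 2`. -/
noncomputable def auxTail (K1 K2 a : ℕ → ℝ) (m : ℕ) : ℝ :=
  ∑ i ∈ Icc 1 m, K2 i * a i * ∏ j ∈ Icc (i + 1) m, ((j : ℝ) + K1 j + K2 j)
    + K2 0 * ∏ i ∈ Icc 1 m, ((i : ℝ) + K1 i + K2 i)

theorem auxTail_zero (K1 K2 a : ℕ → ℝ) : auxTail K1 K2 a 0 = K2 0 := by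
  simp [auxTail]

theorem auxTail_succ (K1 K2 a : ℕ → ℝ) (m : ℕ) :
    auxTail K1 K2 a (m + 1)
      = auxTail K1 K2 a m * ((m + 1 : ℕ) + K1 (m + 1) + K2 (m + 1)) + K2 (m + 1) * a (m + 1) := by
  rw [auxTail, sum_Icc_mul_prod_Icc_succ_top _ _ (by omega),
    prod_Icc_succ_top (by omega), auxTail]
  ring

/-- Simplification of the recursion for the paper's auxiliary sequence `a`:
`a_2 = K3(1)(K3(0)+K2(0))` and, for `n ≥ 2`,
`a_{n+1} = [K3(n)(n−1+K1(n−1)+K2(n−1)+K3(n−1))/K3(n−1)]·a_n − K3(n)(n−1+K1(n−1))·a_{n−1}`. -/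
theorem aux_a_three_term_recursion (K1 K2 K3 a : ℕ → ℝ)
    (hK3 : ∀ n : ℕ, K3 n ≠ 0)
    (ha1 : a 1 = K3 0)
    (haRec : ∀ n : ℕ, 2 ≤ n →
      a n = K3 (n - 1) * a (n - 1)
        + K3 (n - 1) * ∑ i ∈ Finset.Icc 1 (n - 2), K2 i * a i *
            ∏ j ∈ Finset.Icc (i + 1) (n - 2), ((j : ℝ) + K1 j + K2 j)
        + K3 (n - 1) * K2 0 * ∏ i ∈ Finset.Icc 1 (n - 2), ((i : ℝ) + K1 i + K2 i)) :
    a 2 = K3 1 * (K3 0 + K2 0)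
    ∧ ∀ n : ℕ, 2 ≤ n →
      a (n + 1) = K3 n * ((n : ℝ) - 1 + K1 (n - 1) + K2 (n - 1) + K3 (n - 1)) / K3 (n - 1) * a n
        - K3 n * ((n : ℝ) - 1 + K1 (n - 1)) * a (n - 1) := by
  have step : ∀ m, a (m + 2) = K3 (m + 1) * (a (m + 1) + auxTail K1 K2 a m) := fun m => by
    rw [haRec (m + 2) (by omega), auxTail, show m + 2 - 1 = m + 1 by omega, Nat.add_sub_cancel]
    ring
  refine ⟨by rw [step 0, auxTail_zero, ha1], fun n hn => ?_⟩
  obtain ⟨m, rfl⟩ : ∃ m, n = m + 2 := ⟨n - 2, by omega⟩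
  have tail : auxTail K1 K2 a m = a (m + 2) / K3 (m + 1) - a (m + 1) := by
    rw [step m]; field_simp [hK3 (m + 1)]; ring
  rw [show m + 2 + 1 = m + 1 + 2 from rfl, step (m + 1), auxTail_succ, tail]
  push_cast
  field_simp [hK3 (m + 1)]
  ring
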